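/- arXiv:2001.06721 — 2 statements merged into one kernel-verified Lean document; each statement's English description precedes it below -/
import Mathlib

section
/- Let φ be a real-valued smooth function on a domain in ℝ^{2n} ≅ ℂ^n whose real Hessian satisfies Σ_{j,k=1}^{2n} (∂²φ/∂x_j∂x_k) ξ_j ξ_k ≥ c|ξ|² for all ξ ∈ ℝ^{2n}, where c > 0. Then for all ω ∈ ℂ^n, Σ_{j,k=1}^{n} (∂²φ/∂z_j∂z̄_k) ω_j ω̄_k ≥ (c/2)|ω|² + | Σ_{j,k=1}^{n} (∂²φ/∂z_j∂z_k) ω_j ω_k |. -/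
open Complex MeasureTheory

/-- Partial derivative in the `j`-th coordinate direction. -/
noncomputable def pd {N : ℕ} {F : Type*} [NormedAddCommGroup F] [NormedSpace ℝ F]
    (j : Fin N) (f : EuclideanSpace ℝ (Fin N) → F) (x : EuclideanSpace ℝ (Fin N)) : F :=
  fderiv ℝ f x (EuclideanSpace.single j 1)

/-- The index of `x_j` in `ℝ^{2n}` under the identification `z_j = x_j + i x_{j+n}`. -/
def idx1 {n : ℕ} (j : Fin n) : Fin (2 * n) := ⟨j.1, by have := j.2; omega⟩

/-- The index of `x_{j+n}` in `ℝ^{2n}`. -/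
def idx2 {n : ℕ} (j : Fin n) : Fin (2 * n) := ⟨j.1 + n, by have := j.2; omega⟩

/-- Wirtinger derivative `∂/∂z_j = (1/2)(∂/∂x_j - i ∂/∂x_{j+n})`. -/
noncomputable def wz {n : ℕ} (j : Fin n) (f : EuclideanSpace ℝ (Fin (2 * n)) → ℂ)
    (x : EuclideanSpace ℝ (Fin (2 * n))) : ℂ :=
  (1 / 2 : ℂ) * (pd (idx1 j) f x - Complex.I * pd (idx2 j) f x)

/-- Wirtinger derivative `∂/∂z̄_j = (1/2)(∂/∂x_j + i ∂/∂x_{j+n})`. -/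
noncomputable def wzbar {n : ℕ} (j : Fin n) (f : EuclideanSpace ℝ (Fin (2 * n)) → ℂ)
    (x : EuclideanSpace ℝ (Fin (2 * n))) : ℂ :=
  (1 / 2 : ℂ) * (pd (idx1 j) f x + Complex.I * pd (idx2 j) f x)

lemma sum_idx_split {n : ℕ} {M : Type*} [AddCommMonoid M] (f : Fin (2*n) → M) :
    ∑ a, f a = ∑ j : Fin n, f (idx1 j) + ∑ j : Fin n, f (idx2 j) := by
  have h : ∑ i : Fin (n+n), f (Fin.cast (by omega) i) = ∑ a, f a :=
    Fintype.sum_equiv (finCongr (by omega)) _ _ (fun i => rfl)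
  rw [← h, Fin.sum_univ_add]
  congr 1 <;>
  · refine Finset.sum_congr rfl fun j _ => ?_
    congr 1
    ext
    simp only [idx1, idx2, Fin.coe_cast, Fin.coe_castAdd, Fin.coe_natAdd]
    omega

lemma wz_apply {n : ℕ} (j : Fin n) (f : EuclideanSpace ℝ (Fin (2 * n)) → ℂ)
    (x : EuclideanSpace ℝ (Fin (2 * n))) :
    wz j f x = (1 / 2 : ℂ) * (pd (idx1 j) f x - Complex.I * pd (idx2 j) f x) := rfl

lemma pd_congr {N : ℕ} (f g : EuclideanSpace ℝ (Fin N) → ℂ) (a : Fin N) (x)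
    (h : f =ᶠ[nhds x] g) : pd a f x = pd a g x := by unfold pd; rw [h.fderiv_eq]

lemma pd_ofReal {N : ℕ} (f : EuclideanSpace ℝ (Fin N) → ℝ) (a : Fin N) (x)
    (hf : DifferentiableAt ℝ f x) :
    pd a (fun y => (f y : ℂ)) x = ((pd a f x : ℝ) : ℂ) := by
  unfold pd
  have : fderiv ℝ (fun y => ((f y : ℂ))) x = Complex.ofRealCLM.comp (fderiv ℝ f x) :=
    (Complex.ofRealCLM.hasFDerivAt.comp x hf.hasFDerivAt).fderiv
  rw [this]; rfl

lemma pd_comb {N : ℕ} (g1 g2 : EuclideanSpace ℝ (Fin N) → ℝ) (u v : ℂ) (a : Fin N) (x)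
    (h1 : DifferentiableAt ℝ g1 x) (h2 : DifferentiableAt ℝ g2 x) :
    pd a (fun y => u * (g1 y : ℂ) + v * (g2 y : ℂ)) x
      = u * ((pd a g1 x : ℝ) : ℂ) + v * ((pd a g2 x : ℝ) : ℂ) := by
  have h1' : DifferentiableAt ℝ (fun y => (g1 y : ℂ)) x :=
    Complex.ofRealCLM.differentiableAt.comp x h1
  have h2' : DifferentiableAt ℝ (fun y => (g2 y : ℂ)) x :=
    Complex.ofRealCLM.differentiableAt.comp x h2
  have e1 := pd_ofReal g1 a x h1
  have e2 := pd_ofReal g2 a x h2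
  unfold pd at *
  rw [fderiv_fun_add (h1'.const_mul u) (h2'.const_mul v)]
  rw [fderiv_const_mul h1' u, fderiv_const_mul h2' v]
  simp [e1, e2]

/-- If the real Hessian of a smooth `φ` is bounded below by `c > 0`, then the
complex Hessian dominates `(c/2)|ω|²` plus the modulus of the pure `(2,0)`-Hessian term. -/
theorem complex_hessian_lower_bound_with_pure_term {n : ℕ}
    (U : Set (EuclideanSpace ℝ (Fin (2 * n)))) (hU : IsOpen U)
    (φ : EuclideanSpace ℝ (Fin (2 * n)) → ℝ) (hφ : ContDiffOn ℝ (⊤ : ℕ∞) φ U)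
    (c : ℝ) (hc : 0 < c)
    (hHess : ∀ x ∈ U, ∀ ξ : Fin (2 * n) → ℝ,
      (∑ j, ∑ k, pd j (fun y => pd k φ y) x * ξ j * ξ k) ≥ c * ∑ j, (ξ j) ^ 2) :
    ∀ x ∈ U, ∀ ω : Fin n → ℂ,
      (∑ j : Fin n, ∑ k : Fin n,
          wz j (fun y => wzbar k (fun z => (φ z : ℂ)) y) x * ω j * (starRingEnd ℂ) (ω k)).re
        ≥ c / 2 * ∑ j, ‖ω j‖ ^ 2
          + ‖(∑ j : Fin n, ∑ k : Fin n,
              wz j (fun y => wz k (fun z => (φ z : ℂ)) y) x * ω j * ω k)‖ := by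
  intro x hx ω
  have hdφ : ∀ y ∈ U, DifferentiableAt ℝ φ y := fun y hy =>
    (hφ.differentiableOn (by simp)).differentiableAt (hU.mem_nhds hy)
  have hg : ∀ b : Fin (2 * n), ∀ y ∈ U, DifferentiableAt ℝ (fun z => pd b φ z) y := by
    intro b
    have h1 : ContDiffOn ℝ (⊤ : ℕ∞) (fderiv ℝ φ) U := hφ.fderiv_of_isOpen hU (by simp)
    have h2 : ContDiffOn ℝ (⊤ : ℕ∞) (fun z => pd b φ z) U := by
      have h3 := (ContinuousLinearMap.apply ℝ ℝ
        (EuclideanSpace.single b 1)).contDiff.comp_contDiffOn h1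
      exact h3.congr fun z _ => rfl
    exact fun y hy => (h2.differentiableOn (by simp)).differentiableAt (hU.mem_nhds hy)
  set H : Fin (2 * n) → Fin (2 * n) → ℝ := fun a b => pd a (fun y => pd b φ y) x with hHdef
  -- first-order rewriting of wzbar / wz near x
  have pdbar : ∀ (a : Fin (2 * n)) (k : Fin n),
      pd a (fun y => wzbar k (fun z => (φ z : ℂ)) y) x
        = (1/2 : ℂ) * ((H a (idx1 k) : ℝ) : ℂ) + ((1/2 : ℂ) * Complex.I) * ((H a (idx2 k) : ℝ) : ℂ) := by
    intro a k
    have hev : (fun y => wzbar k (fun z => (φ z : ℂ)) y) =ᶠ[nhds x]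
        (fun y => (1/2 : ℂ) * ((pd (idx1 k) φ y : ℝ) : ℂ)
          + ((1/2 : ℂ) * Complex.I) * ((pd (idx2 k) φ y : ℝ) : ℂ)) := by
      filter_upwards [hU.mem_nhds hx] with y hy
      unfold wzbar
      rw [pd_ofReal φ _ _ (hdφ y hy), pd_ofReal φ _ _ (hdφ y hy)]
      ring
    rw [pd_congr _ _ _ _ hev, pd_comb _ _ _ _ _ _ (hg _ x hx) (hg _ x hx)]
  have pdz : ∀ (a : Fin (2 * n)) (k : Fin n),
      pd a (fun y => wz k (fun z => (φ z : ℂ)) y) x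
        = (1/2 : ℂ) * ((H a (idx1 k) : ℝ) : ℂ) + (-((1/2 : ℂ) * Complex.I)) * ((H a (idx2 k) : ℝ) : ℂ) := by
    intro a k
    have hev : (fun y => wz k (fun z => (φ z : ℂ)) y) =ᶠ[nhds x]
        (fun y => (1/2 : ℂ) * ((pd (idx1 k) φ y : ℝ) : ℂ)
          + (-((1/2 : ℂ) * Complex.I)) * ((pd (idx2 k) φ y : ℝ) : ℂ)) := by
      filter_upwards [hU.mem_nhds hx] with y hy
      unfold wz
      rw [pd_ofReal φ _ _ (hdφ y hy), pd_ofReal φ _ _ (hdφ y hy)]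
      ring
    rw [pd_congr _ _ _ _ hev, pd_comb _ _ _ _ _ _ (hg _ x hx) (hg _ x hx)]
  have hL : ∀ j k : Fin n, wz j (fun y => wzbar k (fun z => (φ z : ℂ)) y) x
      = ((1/4 : ℝ) : ℂ) * (((H (idx1 j) (idx1 k) + H (idx2 j) (idx2 k) : ℝ) : ℂ)
          + Complex.I * ((H (idx1 j) (idx2 k) - H (idx2 j) (idx1 k) : ℝ) : ℂ)) := by
    intro j k
    rw [wz_apply, pdbar, pdbar]
    push_cast
    linear_combination (-(1/4 : ℂ) * ((H (idx2 j) (idx2 k) : ℝ) : ℂ)) * Complex.I_sq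
  have hP : ∀ j k : Fin n, wz j (fun y => wz k (fun z => (φ z : ℂ)) y) x
      = ((1/4 : ℝ) : ℂ) * (((H (idx1 j) (idx1 k) - H (idx2 j) (idx2 k) : ℝ) : ℂ)
          - Complex.I * ((H (idx1 j) (idx2 k) + H (idx2 j) (idx1 k) : ℝ) : ℂ)) := by
    intro j k
    rw [wz_apply j, pdz, pdz]
    push_cast
    linear_combination ((1/4 : ℂ) * ((H (idx2 j) (idx2 k) : ℝ) : ℂ)) * Complex.I_sq
  have inner_split : ∀ (g : Fin (2 * n) → Fin (2 * n) → ℝ), (∑ a, ∑ b, g a b)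
      = ∑ j : Fin n, ∑ k : Fin n, (g (idx1 j) (idx1 k) + g (idx1 j) (idx2 k)
          + g (idx2 j) (idx1 k) + g (idx2 j) (idx2 k)) := by
    intro g
    rw [sum_idx_split (f := fun a => ∑ b, g a b)]
    simp only [sum_idx_split (M := ℝ)]
    rw [← Finset.sum_add_distrib]
    refine Finset.sum_congr rfl fun j _ => ?_
    rw [← Finset.sum_add_distrib, ← Finset.sum_add_distrib, ← Finset.sum_add_distrib]
    exact Finset.sum_congr rfl fun k _ => by ring
  have normsq : ∀ z : ℂ, ‖z‖ ^ 2 = z.re ^ 2 + z.im ^ 2 := fun z => by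
    rw [Complex.sq_norm, Complex.normSq_apply]; ring
  -- the key inequality, for arbitrary ω'
  have key : ∀ ω' : Fin n → ℂ,
      (∑ j : Fin n, ∑ k : Fin n,
          wz j (fun y => wzbar k (fun z => (φ z : ℂ)) y) x * ω' j * (starRingEnd ℂ) (ω' k)).re
        + (∑ j : Fin n, ∑ k : Fin n,
            wz j (fun y => wz k (fun z => (φ z : ℂ)) y) x * ω' j * ω' k).re
        ≥ c / 2 * ∑ j, ‖ω' j‖ ^ 2 := by
    intro ω'
    set ξ : Fin (2 * n) → ℝ := fun a =>
      if h : (a : ℕ) < n then (ω' ⟨a, h⟩).re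
      else (ω' ⟨(a : ℕ) - n, by have := a.2; omega⟩).im with hξdef
    have hξ1 : ∀ j : Fin n, ξ (idx1 j) = (ω' j).re := by
      intro j
      simp only [hξdef, idx1]
      rw [dif_pos j.2]
    have hξ2 : ∀ j : Fin n, ξ (idx2 j) = (ω' j).im := by
      intro j
      simp only [hξdef, idx2]
      rw [dif_neg (by omega)]
      exact congrArg (fun t => (ω' t).im) (Fin.ext (by simp))
    have hq := hHess x hx ξ
    rw [inner_split (fun a b => pd a (fun y => pd b φ y) x * ξ a * ξ b)] at hq
    rw [sum_idx_split (f := fun a => ξ a ^ 2)] at hq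
    simp only [hξ1, hξ2] at hq
    have lhs_eq : (∑ j : Fin n, ∑ k : Fin n,
          wz j (fun y => wzbar k (fun z => (φ z : ℂ)) y) x * ω' j * (starRingEnd ℂ) (ω' k)).re
        + (∑ j : Fin n, ∑ k : Fin n,
            wz j (fun y => wz k (fun z => (φ z : ℂ)) y) x * ω' j * ω' k).re
        = (1/2 : ℝ) * ∑ j : Fin n, ∑ k : Fin n,
            (H (idx1 j) (idx1 k) * (ω' j).re * (ω' k).re
              + H (idx1 j) (idx2 k) * (ω' j).re * (ω' k).im
              + H (idx2 j) (idx1 k) * (ω' j).im * (ω' k).re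
              + H (idx2 j) (idx2 k) * (ω' j).im * (ω' k).im) := by
      simp only [Complex.re_sum]
      rw [← Finset.sum_add_distrib, Finset.mul_sum]
      refine Finset.sum_congr rfl fun j _ => ?_
      rw [← Finset.sum_add_distrib, Finset.mul_sum]
      refine Finset.sum_congr rfl fun k _ => ?_
      rw [hL, hP]
      simp only [Complex.mul_re, Complex.mul_im, Complex.add_re, Complex.add_im,
        Complex.sub_re, Complex.sub_im, Complex.I_re, Complex.I_im,
        Complex.ofReal_re, Complex.ofReal_im, Complex.conj_re, Complex.conj_im]
      ring
    have rhs_eq : ∑ j, ‖ω' j‖ ^ 2 = ∑ j, ((ω' j).re ^ 2 + (ω' j).im ^ 2) :=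
      Finset.sum_congr rfl fun j _ => normsq _
    rw [lhs_eq, rhs_eq, Finset.sum_add_distrib]
    linarith [hq]
  -- rotation to absorb the pure term
  set P : ℂ := ∑ j : Fin n, ∑ k : Fin n,
      wz j (fun y => wz k (fun z => (φ z : ℂ)) y) x * ω j * ω k with hPdef
  obtain ⟨u, hu⟩ := IsAlgClosed.exists_pow_nat_eq
    (if P = 0 then 1 else -((‖P‖ : ℝ) : ℂ) / P) two_pos
  have habs_t : ‖(if P = 0 then 1 else -((‖P‖ : ℝ) : ℂ) / P)‖ = 1 := by
    by_cases h : P = 0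
    · simp [h]
    · rw [if_neg h]
      rw [norm_div, norm_neg, Complex.norm_real, norm_norm]
      rw [div_self (norm_ne_zero_iff.mpr h)]
  have habs_u : ‖u‖ = 1 := by
    have : ‖u‖ ^ 2 = 1 := by
      rw [← norm_pow, hu, habs_t]
    nlinarith [norm_nonneg u]
  have hu2P : u ^ 2 * P = -((‖P‖ : ℝ) : ℂ) := by
    rw [hu]
    by_cases h : P = 0
    · simp [h]
    · rw [if_neg h, div_mul_cancel₀ _ h]
  have hkey := key (fun j => u * ω j)
  have e1 : (∑ j : Fin n, ∑ k : Fin n,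
        wz j (fun y => wzbar k (fun z => (φ z : ℂ)) y) x * (u * ω j) * (starRingEnd ℂ) (u * ω k))
      = ∑ j : Fin n, ∑ k : Fin n,
        wz j (fun y => wzbar k (fun z => (φ z : ℂ)) y) x * ω j * (starRingEnd ℂ) (ω k) := by
    refine Finset.sum_congr rfl fun j _ => Finset.sum_congr rfl fun k _ => ?_
    have huc : u * (starRingEnd ℂ) u = 1 := by
      rw [Complex.mul_conj, Complex.normSq_eq_norm_sq, habs_u]
      norm_num
    rw [map_mul]
    linear_combination (wz j (fun y => wzbar k (fun z => (φ z : ℂ)) y) x * ω j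
      * (starRingEnd ℂ) (ω k)) * huc
  have e2 : (∑ j : Fin n, ∑ k : Fin n,
        wz j (fun y => wz k (fun z => (φ z : ℂ)) y) x * (u * ω j) * (u * ω k)) = u ^ 2 * P := by
    rw [hPdef, Finset.mul_sum]
    refine Finset.sum_congr rfl fun j _ => ?_
    rw [Finset.mul_sum]
    exact Finset.sum_congr rfl fun k _ => by ring
  have e3 : (∑ j, ‖u * ω j‖ ^ 2) = ∑ j, ‖ω j‖ ^ 2 := by
    refine Finset.sum_congr rfl fun j _ => ?_
    rw [norm_mul, habs_u, one_mul]
  rw [e1, e2, e3, hu2P] at hkey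
  simp only [Complex.neg_re, Complex.ofReal_re] at hkey
  linarith [hkey]
end

section
/- Let α = Σ'_{|J|=p+1} α_J dx^J be a smooth (p+1)-form on an open set in ℝ^N (the primed sum is over strictly increasing multi-indices). Then pointwise |dα|² = Σ'_{|J|=p+1} Σ_{j=1}^{N} |∂α_J/∂x_j|² − Σ'_{|I|=p} Σ_{j,k=1}^{N} (∂α_{kI}/∂x_j)(∂α_{jI}/∂x_k), where for a multi-index I of length p and index j, α_{jI} denotes the coefficient α with indices (j, i_1, ..., i_p), extended antisymmetrically in its indices (in particular α_{jI} = 0 if j ∈ I). -/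
open Finset

/-- A tuple of indices is strictly increasing. -/
def Incr {m N : ℕ} (J : Fin m → Fin N) : Prop := ∀ a b : Fin m, a < b → J a < J b

instance {m N : ℕ} (J : Fin m → Fin N) : Decidable (Incr J) := by
  unfold Incr; infer_instance

/-- The coefficient of the exterior derivative `dα` on the index tuple `m`:
`(dα)_m = Σ_i (-1)^i ∂_{m i} α_{m with i-th entry removed}`. -/
noncomputable def dcoef {N p : ℕ} (α : (Fin (p + 1) → Fin N) → EuclideanSpace ℝ (Fin N) → ℝ)
    (m : Fin (p + 2) → Fin N) (x : EuclideanSpace ℝ (Fin N)) : ℝ :=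
  ∑ i : Fin (p + 2), (-1 : ℝ) ^ (i : ℕ) * pd (m i) (α fun t => m (i.succAbove t)) x

namespace NSED
variable {N m : ℕ}

lemma incr_iff {J : Fin m → Fin N} : Incr J ↔ StrictMono J :=
  ⟨fun h _ _ hab => h _ _ hab, fun h a b hab => h hab⟩

def sset (J : Fin m → Fin N) (j : Fin N) : Finset (Fin N) := insert j (image J univ)

lemma sset_card {J : Fin m → Fin N} {j : Fin N} (hJ : Function.Injective J)
    (hj : j ∉ image J univ) : (sset J j).card = m + 1 := by
  rw [sset, card_insert_of_notMem hj, card_image_of_injective _ hJ, card_univ,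
    Fintype.card_fin]

noncomputable def sortIns (J : Fin m → Fin N) (j : Fin N) : Fin (m+1) → Fin N :=
  if h : (sset J j).card = m + 1 then (sset J j).orderEmbOfFin h else fun _ => j

noncomputable def posIns (J : Fin m → Fin N) (j : Fin N) : Fin (m+1) :=
  if h : (sset J j).card = m + 1 then
    ((sset J j).orderIsoOfFin h).symm ⟨j, by simp [sset]⟩ else 0

lemma sortIns_strictMono {J : Fin m → Fin N} {j : Fin N} (hJ : Function.Injective J)
    (hj : j ∉ image J univ) : StrictMono (sortIns J j) := by
  rw [sortIns, dif_pos (sset_card hJ hj)]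
  exact ((sset J j).orderEmbOfFin _).strictMono

lemma sortIns_posIns {J : Fin m → Fin N} {j : Fin N} (hJ : Function.Injective J)
    (hj : j ∉ image J univ) : sortIns J j (posIns J j) = j := by
  rw [sortIns, posIns, dif_pos (sset_card hJ hj), dif_pos (sset_card hJ hj)]
  have := ((sset J j).orderIsoOfFin (sset_card hJ hj)).apply_symm_apply ⟨j, by simp [sset]⟩
  rw [Finset.orderEmbOfFin]
  exact congrArg Subtype.val this

end NSED
namespace NSED
variable {N m : ℕ}

lemma range_sortIns {J : Fin m → Fin N} {j : Fin N} (hJ : Function.Injective J)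
    (hj : j ∉ image J univ) : Set.range (sortIns J j) = ↑(sset J j) := by
  rw [sortIns, dif_pos (sset_card hJ hj)]
  exact Finset.range_orderEmbOfFin _ _

lemma sortIns_comp {J : Fin m → Fin N} {j : Fin N} (hJ : StrictMono J)
    (hj : j ∉ image J univ) :
    (sortIns J j) ∘ (posIns J j).succAbove = J := by
  have hInj : Function.Injective J := hJ.injective
  have hM : StrictMono (sortIns J j) := sortIns_strictMono hInj hj
  have hcomp : StrictMono ((sortIns J j) ∘ (posIns J j).succAbove) :=
    hM.comp (Fin.strictMono_succAbove _)
  have hcoe : (↑(sset J j) : Set (Fin N)) = insert j (Set.range J) := by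
    simp [sset, coe_insert, Set.image_univ]
  have hrange : Set.range ((sortIns J j) ∘ (posIns J j).succAbove) = Set.range J := by
    rw [Set.range_comp, Fin.range_succAbove]
    ext y
    simp only [Set.mem_image, Set.mem_compl_iff, Set.mem_singleton_iff, Set.mem_range]
    constructor
    · rintro ⟨t, ht, rfl⟩
      have hmem : sortIns J j t ∈ Set.range (sortIns J j) := ⟨t, rfl⟩
      rw [range_sortIns hInj hj, hcoe] at hmem
      have hne : sortIns J j t ≠ j := fun h =>
        ht (hM.injective (h.trans (sortIns_posIns hInj hj).symm))
      rcases hmem with h | h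
      · exact absurd h hne
      · exact h
    · rintro ⟨t, rfl⟩
      have hmem : J t ∈ Set.range (sortIns J j) := by
        rw [range_sortIns hInj hj, hcoe]
        exact Or.inr ⟨t, rfl⟩
      rcases hmem with ⟨u, hu⟩
      refine ⟨u, fun h => ?_, hu⟩
      subst h
      rw [sortIns_posIns hInj hj] at hu
      exact hj (by rw [hu]; exact mem_image_of_mem _ (mem_univ t))
  haveI : WellFoundedLT (Fin m) := inferInstance
  exact (hcomp.range_inj hJ).mp hrange

end NSED

namespace NSED
variable {N m : ℕ}

lemma removal_mem {M : Fin (m+1) → Fin N} (hM : Function.Injective M) (i : Fin (m+1)) :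
    M i ∉ image (M ∘ i.succAbove) univ := by
  intro h
  rcases mem_image.mp h with ⟨t, _, ht⟩
  exact Fin.succAbove_ne i t (hM ht)

lemma sset_removal {M : Fin (m+1) → Fin N} (i : Fin (m+1)) :
    sset (M ∘ i.succAbove) (M i) = image M univ := by
  ext y
  simp only [sset, mem_insert, mem_image, mem_univ, true_and, Function.comp_apply]
  constructor
  · rintro (rfl | ⟨t, rfl⟩)
    · exact ⟨i, rfl⟩
    · exact ⟨i.succAbove t, rfl⟩
  · rintro ⟨t, rfl⟩
    rcases eq_or_ne t i with rfl | h
    · exact Or.inl rfl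
    · rcases Fin.exists_succAbove_eq h with ⟨u, rfl⟩
      exact Or.inr ⟨u, rfl⟩

lemma sortIns_removal {M : Fin (m+1) → Fin N} (hM : StrictMono M) (i : Fin (m+1)) :
    sortIns (M ∘ i.succAbove) (M i) = M := by
  have hinj : Function.Injective (M ∘ i.succAbove) :=
    hM.injective.comp (Fin.succAbove_right_injective)
  have hrem := removal_mem hM.injective i
  have hcard := sset_card hinj hrem
  rw [sortIns, dif_pos hcard]
  have hcard' : (sset (M ∘ i.succAbove) (M i)).card = m + 1 := hcard
  refine (Finset.orderEmbOfFin_unique hcard' (fun x => ?_) hM).symm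
  rw [sset_removal]
  exact mem_image_of_mem _ (mem_univ x)

lemma posIns_removal {M : Fin (m+1) → Fin N} (hM : StrictMono M) (i : Fin (m+1)) :
    posIns (M ∘ i.succAbove) (M i) = i := by
  have hinj : Function.Injective (M ∘ i.succAbove) :=
    hM.injective.comp (Fin.succAbove_right_injective)
  have hrem := removal_mem hM.injective i
  have h1 : sortIns (M ∘ i.succAbove) (M i) (posIns (M ∘ i.succAbove) (M i)) = M i :=
    sortIns_posIns hinj hrem
  rw [sortIns_removal hM i] at h1
  exact hM.injective h1

end NSED

namespace NSED
variable {N : ℕ}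

lemma ins_sum {m : ℕ} (F : (Fin m → Fin N) → Fin N → ℝ) :
    (∑ M : Fin (m+1) → Fin N, if Incr M then ∑ i, F (M ∘ i.succAbove) (M i) else 0)
    = ∑ J : Fin m → Fin N, if Incr J then ∑ j, (if j ∈ image J univ then 0 else F J j) else 0 := by
  have l1 : (∑ M : Fin (m+1) → Fin N, if Incr M then ∑ i, F (M ∘ i.succAbove) (M i) else 0)
      = ∑ q ∈ univ.filter (fun q : ((Fin (m+1) → Fin N) × Fin (m+1)) => Incr q.1),
          F (q.1 ∘ q.2.succAbove) (q.1 q.2) := by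
    rw [Finset.sum_filter, Fintype.sum_prod_type]
    refine Finset.sum_congr rfl fun M _ => ?_
    by_cases h : Incr M
    · simp [h]
    · simp [h]
  have l2 : (∑ J : Fin m → Fin N, if Incr J then ∑ j,
        (if j ∈ image J univ then 0 else F J j) else 0)
      = ∑ q ∈ univ.filter (fun q : ((Fin m → Fin N) × Fin N) => Incr q.1 ∧ q.2 ∉ image q.1 univ),
          F q.1 q.2 := by
    rw [Finset.sum_filter, Fintype.sum_prod_type]
    refine Finset.sum_congr rfl fun J _ => ?_
    by_cases h : Incr J
    · simp only [h, if_true, true_and]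
      refine Finset.sum_congr rfl fun j _ => ?_
      by_cases h2 : j ∈ image J univ <;> simp [h2]
    · simp [h]
  rw [l1, l2]
  refine Finset.sum_bij' (fun q _ => (q.1 ∘ q.2.succAbove, q.1 q.2))
    (fun q _ => (sortIns q.1 q.2, posIns q.1 q.2)) ?_ ?_ ?_ ?_ ?_
  · rintro ⟨M, i⟩ hM
    simp only [mem_filter, mem_univ, true_and] at hM ⊢
    have hM' : StrictMono M := incr_iff.mp hM
    exact ⟨incr_iff.mpr (hM'.comp (Fin.strictMono_succAbove i)),
      removal_mem hM'.injective i⟩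
  · rintro ⟨J, j⟩ hJ
    simp only [mem_filter, mem_univ, true_and] at hJ ⊢
    exact incr_iff.mpr (sortIns_strictMono (incr_iff.mp hJ.1).injective hJ.2)
  · rintro ⟨M, i⟩ hM
    simp only [mem_filter, mem_univ, true_and] at hM
    have hM' : StrictMono M := incr_iff.mp hM
    simp only [Prod.mk.injEq]
    exact ⟨sortIns_removal hM' i, posIns_removal hM' i⟩
  · rintro ⟨J, j⟩ hJ
    simp only [mem_filter, mem_univ, true_and] at hJ
    have h1 := sortIns_comp (incr_iff.mp hJ.1) hJ.2
    have h2 := sortIns_posIns (incr_iff.mp hJ.1).injective hJ.2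
    simp only [Prod.mk.injEq]
    exact ⟨h1, h2⟩
  · rintro ⟨M, i⟩ hM
    rfl

end NSED

namespace NSED
variable {N : ℕ}

lemma cons_eq_comp {n : ℕ} (l : Fin (n+1) → Fin N) (i : Fin (n+1)) :
    (Fin.cons (l i) (fun t => l (i.succAbove t)) : Fin (n+1) → Fin N)
      = l ∘ (i.cycleRange.symm : Equiv.Perm (Fin (n+1))) := by
  funext t
  refine Fin.cases ?_ (fun s => ?_) t
  · simp
  · simp

lemma cons_sign {p : ℕ} (g : (Fin (p+1) → Fin N) → Fin N → ℝ)
    (G1 : ∀ (l : Fin (p+1) → Fin N) (σ : Equiv.Perm (Fin (p+1))) (z : Fin N),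
      g (l ∘ σ) z = ((Equiv.Perm.sign σ : ℤ) : ℝ) * g l z)
    (l : Fin (p+1) → Fin N) (i : Fin (p+1)) (z : Fin N) :
    g (Fin.cons (l i) (fun t => l (i.succAbove t))) z = (-1 : ℝ)^(i : ℕ) * g l z := by
  rw [cons_eq_comp, G1]
  congr 1
  rw [Equiv.Perm.sign_symm, Fin.sign_cycleRange]
  push_cast
  ring

end NSED

namespace NSED
variable {N : ℕ}

lemma range_comp_succAbove {n : ℕ} (a : Fin (n+2)) (b : Fin (n+1)) :
    Set.range (a.succAbove ∘ b.succAbove) = {y | y ≠ a ∧ y ≠ a.succAbove b} := by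
  ext y
  simp only [Set.range_comp, Set.mem_image, Set.mem_range, Set.mem_setOf_eq]
  constructor
  · rintro ⟨z, ⟨t, rfl⟩, rfl⟩
    refine ⟨Fin.succAbove_ne a _, fun h => ?_⟩
    exact Fin.succAbove_ne b t (Fin.succAbove_right_injective h)
  · rintro ⟨h1, h2⟩
    obtain ⟨u, hu⟩ := Fin.exists_succAbove_eq (Ne.symm h1).symm
    have hu' : u ≠ b := fun h => h2 (by rw [← hu, h])
    obtain ⟨t, ht⟩ := Fin.exists_succAbove_eq (Ne.symm hu').symm
    exact ⟨u, ⟨t, ht⟩, hu⟩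

lemma succAbove_comp_comm {n : ℕ} (i : Fin (n+2)) (i'' : Fin (n+1)) (i₂ : Fin (n+1))
    (h2 : (i.succAbove i'').succAbove i₂ = i) :
    i.succAbove ∘ i''.succAbove = (i.succAbove i'').succAbove ∘ i₂.succAbove := by
  have hm1 : StrictMono (i.succAbove ∘ i''.succAbove) :=
    (Fin.strictMono_succAbove i).comp (Fin.strictMono_succAbove i'')
  have hm2 : StrictMono ((i.succAbove i'').succAbove ∘ i₂.succAbove) :=
    (Fin.strictMono_succAbove _).comp (Fin.strictMono_succAbove i₂)
  have hr : Set.range (i.succAbove ∘ i''.succAbove)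
      = Set.range ((i.succAbove i'').succAbove ∘ i₂.succAbove) := by
    rw [range_comp_succAbove, range_comp_succAbove, h2]
    ext y
    simp only [Set.mem_setOf_eq]
    tauto
  haveI : WellFoundedLT (Fin n) := inferInstance
  exact (hm1.range_inj hm2).mp hr

lemma succAbove_parity {n : ℕ} (i : Fin (n+2)) (i'' : Fin (n+1)) (i₂ : Fin (n+1))
    (h2 : (i.succAbove i'').succAbove i₂ = i) :
    Odd ((i : ℕ) + (i.succAbove i'' : ℕ) + (i'' : ℕ) + (i₂ : ℕ)) := by
  have v1 : ((i.succAbove i'' : ℕ) = (i'' : ℕ) ∧ (i'' : ℕ) < (i : ℕ))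
      ∨ ((i.succAbove i'' : ℕ) = (i'' : ℕ) + 1 ∧ (i : ℕ) ≤ (i'' : ℕ)) := by
    rw [Fin.succAbove]
    split_ifs with h
    · exact Or.inl ⟨rfl, by simpa [Fin.lt_def] using h⟩
    · exact Or.inr ⟨rfl, by simpa [Fin.lt_def, Nat.not_lt] using h⟩
  have v2 : (((i : ℕ) = (i₂ : ℕ) ∧ (i₂ : ℕ) < (i.succAbove i'' : ℕ))
      ∨ ((i : ℕ) = (i₂ : ℕ) + 1 ∧ (i.succAbove i'' : ℕ) ≤ (i₂ : ℕ))) := by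
    set i' := i.succAbove i'' with hi'
    rw [← h2, Fin.succAbove]
    split_ifs with h
    · exact Or.inl ⟨rfl, by simpa [Fin.lt_def] using h⟩
    · exact Or.inr ⟨rfl, by simpa [Fin.lt_def, Nat.not_lt] using h⟩
  rw [Nat.odd_iff]
  omega

end NSED

namespace NSED
variable {N : ℕ}

lemma sign_helper (a b c d : ℕ) (h : Odd (a+b+c+d)) (X Y : ℝ) :
    (-1:ℝ)^a * X * ((-1:ℝ)^b * Y) = -(((-1:ℝ)^c * X) * ((-1:ℝ)^d * Y)) := by
  rcases Nat.even_or_odd a with ha | ha <;> rcases Nat.even_or_odd b with hb | hb <;>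
    rcases Nat.even_or_odd c with hc | hc <;> rcases Nat.even_or_odd d with hd | hd <;>
    rw [ha.neg_one_pow, hb.neg_one_pow, hc.neg_one_pow, hd.neg_one_pow] <;>
    first
      | ring1
      | (exfalso; simp only [Nat.even_iff, Nat.odd_iff] at ha hb hc hd h; omega)

lemma offd {p : ℕ} (g : (Fin (p+1) → Fin N) → Fin N → ℝ)
    (G1 : ∀ (l : Fin (p+1) → Fin N) (σ : Equiv.Perm (Fin (p+1))) (z : Fin N),
      g (l ∘ σ) z = ((Equiv.Perm.sign σ : ℤ) : ℝ) * g l z)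
    (l : Fin (p+2) → Fin N) (i : Fin (p+2)) (i'' : Fin (p+1)) :
    ((-1:ℝ)^(i:ℕ) * g (fun t => l (i.succAbove t)) (l i)) *
      ((-1:ℝ)^((i.succAbove i'' : Fin (p+2)):ℕ)
        * g (fun t => l ((i.succAbove i'').succAbove t)) (l (i.succAbove i'')))
    = -(g (Fin.cons (l (i.succAbove i'')) (fun t => l (i.succAbove (i''.succAbove t)))) (l i)
        * g (Fin.cons (l i) (fun t => l (i.succAbove (i''.succAbove t)))) (l (i.succAbove i''))) := by
  obtain ⟨i₂, h2⟩ := Fin.exists_succAbove_eq (Fin.ne_succAbove i i'')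
  have hcomm := succAbove_comp_comm i i'' i₂ h2
  have hodd := succAbove_parity i i'' i₂ h2
  have c1 : g (Fin.cons (l (i.succAbove i'')) (fun t => l (i.succAbove (i''.succAbove t)))) (l i)
      = (-1:ℝ)^(i'':ℕ) * g (fun t => l (i.succAbove t)) (l i) :=
    cons_sign g G1 (fun t => l (i.succAbove t)) i'' (l i)
  have c2 : g (Fin.cons (l i) (fun t => l (i.succAbove (i''.succAbove t)))) (l (i.succAbove i''))
      = (-1:ℝ)^(i₂:ℕ) * g (fun t => l ((i.succAbove i'').succAbove t)) (l (i.succAbove i'')) := by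
    have hfun : (fun t => l (i.succAbove (i''.succAbove t)))
        = (fun t => l ((i.succAbove i'').succAbove (i₂.succAbove t))) :=
      funext fun t => congrArg l (congrFun hcomm t)
    have := cons_sign g G1 (fun t => l ((i.succAbove i'').succAbove t)) i₂ (l (i.succAbove i''))
    rw [h2] at this
    rw [hfun]
    exact this
  rw [c1, c2]
  exact sign_helper _ _ _ _ hodd _ _

end NSED

namespace NSED
variable {N : ℕ}

lemma core {p : ℕ} (g : (Fin (p+1) → Fin N) → Fin N → ℝ)
    (G1 : ∀ (l : Fin (p+1) → Fin N) (σ : Equiv.Perm (Fin (p+1))) (z : Fin N),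
      g (l ∘ σ) z = ((Equiv.Perm.sign σ : ℤ) : ℝ) * g l z)
    (G2 : ∀ l : Fin (p+1) → Fin N, ¬Function.Injective l → ∀ z, g l z = 0) :
    (∑ M : Fin (p+2) → Fin N, if Incr M then
        (∑ i : Fin (p+2), (-1:ℝ)^(i:ℕ) * g (M ∘ i.succAbove) (M i))^2 else 0)
    = (∑ J : Fin (p+1) → Fin N, if Incr J then ∑ j, (g J j)^2 else 0)
      - ∑ I : Fin p → Fin N, if Incr I then
          ∑ j, ∑ k, g (Fin.cons k I) j * g (Fin.cons j I) k else 0 := by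
  classical
  -- sign square helper
  have hsq : ∀ (n : ℕ) (x : ℝ), ((-1:ℝ)^n * x) * ((-1:ℝ)^n * x) = x^2 := by
    intro n x
    have h1 : ((-1:ℝ)^n)*((-1:ℝ)^n) = 1 := by
      rw [← pow_add]; exact Even.neg_one_pow ⟨n, rfl⟩
    calc ((-1:ℝ)^n * x) * ((-1:ℝ)^n * x) = (((-1:ℝ)^n)*((-1:ℝ)^n))*(x*x) := by ring
      _ = x^2 := by rw [h1]; ring
  -- degenerate cons vanishing
  have GZ : ∀ (I : Fin p → Fin N) (k : Fin N), k ∈ image I univ →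
      ∀ z, g (Fin.cons k I) z = 0 := by
    intro I k hk z
    rcases mem_image.mp hk with ⟨t, _, ht⟩
    refine G2 _ (fun hinj => ?_) z
    have h0 : (0 : Fin (p+1)) = t.succ := hinj (by simp [ht])
    exact (Fin.succ_ne_zero t) h0.symm
  -- pointwise expansion of the square
  have expand : ∀ M : Fin (p+2) → Fin N,
      (∑ i : Fin (p+2), (-1:ℝ)^(i:ℕ) * g (M ∘ i.succAbove) (M i))^2
      = (∑ i : Fin (p+2), (g (M ∘ i.succAbove) (M i))^2)
        + ∑ i : Fin (p+2), ∑ i'' : Fin (p+1),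
            -(g (Fin.cons ((M ∘ i.succAbove) i'') ((M ∘ i.succAbove) ∘ i''.succAbove)) (M i)
              * g (Fin.cons (M i) ((M ∘ i.succAbove) ∘ i''.succAbove)) ((M ∘ i.succAbove) i'')) := by
    intro M
    rw [sq, Finset.sum_mul_sum]
    have hrow : ∀ i : Fin (p+2),
        (∑ i' : Fin (p+2), ((-1:ℝ)^(i:ℕ) * g (M ∘ i.succAbove) (M i))
          * ((-1:ℝ)^(i':ℕ) * g (M ∘ i'.succAbove) (M i')))
        = (g (M ∘ i.succAbove) (M i))^2
          + ∑ i'' : Fin (p+1),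
            -(g (Fin.cons ((M ∘ i.succAbove) i'') ((M ∘ i.succAbove) ∘ i''.succAbove)) (M i)
              * g (Fin.cons (M i) ((M ∘ i.succAbove) ∘ i''.succAbove)) ((M ∘ i.succAbove) i'')) := by
      intro i
      rw [Fin.sum_univ_succAbove (fun i' => ((-1:ℝ)^(i:ℕ) * g (M ∘ i.succAbove) (M i))
        * ((-1:ℝ)^(i':ℕ) * g (M ∘ i'.succAbove) (M i'))) i]
      congr 1
      · exact hsq _ _
      · refine Finset.sum_congr rfl fun i'' _ => ?_
        exact offd g G1 M i i''
    rw [Finset.sum_congr rfl (fun i _ => hrow i), Finset.sum_add_distrib]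
  -- split the left-hand side
  have splitL : (∑ M : Fin (p+2) → Fin N, if Incr M then
        (∑ i : Fin (p+2), (-1:ℝ)^(i:ℕ) * g (M ∘ i.succAbove) (M i))^2 else 0)
      = (∑ M : Fin (p+2) → Fin N, if Incr M then
          ∑ i : Fin (p+2), (g (M ∘ i.succAbove) (M i))^2 else 0)
        + ∑ M : Fin (p+2) → Fin N, if Incr M then
            ∑ i : Fin (p+2), ∑ i'' : Fin (p+1),
              -(g (Fin.cons ((M ∘ i.succAbove) i'') ((M ∘ i.succAbove) ∘ i''.succAbove)) (M i)
                * g (Fin.cons (M i) ((M ∘ i.succAbove) ∘ i''.succAbove)) ((M ∘ i.succAbove) i''))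
            else 0 := by
    rw [← Finset.sum_add_distrib]
    refine Finset.sum_congr rfl fun M _ => ?_
    by_cases h : Incr M
    · simp only [h, if_true]; exact expand M
    · simp [h]
  -- diagonal term
  have e1 : (∑ M : Fin (p+2) → Fin N, if Incr M then
        ∑ i : Fin (p+2), (g (M ∘ i.succAbove) (M i))^2 else 0)
      = ∑ J : Fin (p+1) → Fin N, if Incr J then
          ∑ j, (if j ∈ image J univ then 0 else (g J j)^2) else 0 :=
    ins_sum (fun J j => (g J j)^2)
  -- off-diagonal term, first removal
  have e2 : (∑ M : Fin (p+2) → Fin N, if Incr M then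
        ∑ i : Fin (p+2), ∑ i'' : Fin (p+1),
          -(g (Fin.cons ((M ∘ i.succAbove) i'') ((M ∘ i.succAbove) ∘ i''.succAbove)) (M i)
            * g (Fin.cons (M i) ((M ∘ i.succAbove) ∘ i''.succAbove)) ((M ∘ i.succAbove) i''))
        else 0)
      = ∑ J : Fin (p+1) → Fin N, if Incr J then
          ∑ j, (if j ∈ image J univ then 0 else
            ∑ i'' : Fin (p+1),
              -(g (Fin.cons (J i'') (J ∘ i''.succAbove)) j
                * g (Fin.cons j (J ∘ i''.succAbove)) (J i''))) else 0 :=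
    ins_sum (fun J j => ∑ i'' : Fin (p+1),
      -(g (Fin.cons (J i'') (J ∘ i''.succAbove)) j
        * g (Fin.cons j (J ∘ i''.succAbove)) (J i'')))
  -- rewrite the inner conditional sum
  have inner : ∀ (J : Fin (p+1) → Fin N) (j : Fin N),
      (if j ∈ image J univ then 0 else
        ∑ i'' : Fin (p+1), -(g (Fin.cons (J i'') (J ∘ i''.succAbove)) j
          * g (Fin.cons j (J ∘ i''.succAbove)) (J i'')))
      = ∑ i'' : Fin (p+1), -(if j = J i'' ∨ j ∈ image (J ∘ i''.succAbove) univ then 0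
          else g (Fin.cons (J i'') (J ∘ i''.succAbove)) j
            * g (Fin.cons j (J ∘ i''.succAbove)) (J i'')) := by
    intro J j
    by_cases h : j ∈ image J univ
    · rw [if_pos h]
      refine (Finset.sum_eq_zero fun i'' _ => ?_).symm
      rcases mem_image.mp h with ⟨t, _, ht⟩
      rcases eq_or_ne t i'' with rfl | hne
      · rw [if_pos (Or.inl ht.symm), neg_zero]
      · obtain ⟨u, hu⟩ := Fin.exists_succAbove_eq hne
        have hmem : j ∈ image (J ∘ i''.succAbove) univ :=
          mem_image.mpr ⟨u, mem_univ u, by simp [hu, ht]⟩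
        rw [if_pos (Or.inr hmem), neg_zero]
    · rw [if_neg h]
      refine Finset.sum_congr rfl fun i'' _ => ?_
      have hcond : ¬(j = J i'' ∨ j ∈ image (J ∘ i''.succAbove) univ) := by
        rintro (rfl | hmem)
        · exact h (mem_image_of_mem _ (mem_univ i''))
        · rcases mem_image.mp hmem with ⟨u, _, hu⟩
          exact h (mem_image.mpr ⟨i''.succAbove u, mem_univ _, hu⟩)
      rw [if_neg hcond]
  -- swapping helper
  have swapIte : ∀ {m : ℕ} (X : (Fin m → Fin N) → Fin N → ℝ),
      (∑ J : Fin m → Fin N, if Incr J then ∑ j, X J j else 0)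
      = ∑ j : Fin N, ∑ J : Fin m → Fin N, if Incr J then X J j else 0 := by
    intro m X
    calc (∑ J : Fin m → Fin N, if Incr J then ∑ j, X J j else 0)
        = ∑ J : Fin m → Fin N, ∑ j, (if Incr J then X J j else 0) := by
          refine Finset.sum_congr rfl fun J _ => ?_
          by_cases h : Incr J <;> simp [h]
      _ = ∑ j : Fin N, ∑ J : Fin m → Fin N, (if Incr J then X J j else 0) := Finset.sum_comm
  -- per-j second removal
  have e3 : ∀ j : Fin N,
      (∑ J : Fin (p+1) → Fin N, if Incr J then
        ∑ i'' : Fin (p+1), -(if j = J i'' ∨ j ∈ image (J ∘ i''.succAbove) univ then 0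
          else g (Fin.cons (J i'') (J ∘ i''.succAbove)) j
            * g (Fin.cons j (J ∘ i''.succAbove)) (J i'')) else 0)
      = ∑ I : Fin p → Fin N, if Incr I then
          ∑ k, (if k ∈ image I univ then 0 else
            -(if j = k ∨ j ∈ image I univ then 0
              else g (Fin.cons k I) j * g (Fin.cons j I) k)) else 0 :=
    fun j => ins_sum (fun I k => -(if j = k ∨ j ∈ image I univ then 0
      else g (Fin.cons k I) j * g (Fin.cons j I) k))
  -- pulling out the negation
  have negpull : ∀ I : Fin p → Fin N,
      (if Incr I then ∑ j, ∑ k, (if k ∈ image I univ then 0 else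
        -(if j = k ∨ j ∈ image I univ then 0
          else g (Fin.cons k I) j * g (Fin.cons j I) k)) else 0)
      = -(if Incr I then ∑ j, ∑ k, (if k ∈ image I univ then 0 else
        (if j = k ∨ j ∈ image I univ then 0
          else g (Fin.cons k I) j * g (Fin.cons j I) k)) else 0) := by
    intro I
    by_cases h : Incr I
    · rw [if_pos h, if_pos h, ← Finset.sum_neg_distrib]
      refine Finset.sum_congr rfl fun j _ => ?_
      rw [← Finset.sum_neg_distrib]
      refine Finset.sum_congr rfl fun k _ => ?_
      by_cases hk : k ∈ image I univ <;> simp [hk]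
    · simp [h]
  -- full off-diagonal chain
  have offfinal : (∑ M : Fin (p+2) → Fin N, if Incr M then
        ∑ i : Fin (p+2), ∑ i'' : Fin (p+1),
          -(g (Fin.cons ((M ∘ i.succAbove) i'') ((M ∘ i.succAbove) ∘ i''.succAbove)) (M i)
            * g (Fin.cons (M i) ((M ∘ i.succAbove) ∘ i''.succAbove)) ((M ∘ i.succAbove) i''))
        else 0)
      = -∑ I : Fin p → Fin N, if Incr I then
          ∑ j, ∑ k, (if k ∈ image I univ then 0 else
            (if j = k ∨ j ∈ image I univ then 0
              else g (Fin.cons k I) j * g (Fin.cons j I) k)) else 0 := by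
    rw [e2]
    calc (∑ J : Fin (p+1) → Fin N, if Incr J then
          ∑ j, (if j ∈ image J univ then 0 else
            ∑ i'' : Fin (p+1),
              -(g (Fin.cons (J i'') (J ∘ i''.succAbove)) j
                * g (Fin.cons j (J ∘ i''.succAbove)) (J i''))) else 0)
        = ∑ J : Fin (p+1) → Fin N, if Incr J then
            ∑ j, ∑ i'' : Fin (p+1), -(if j = J i'' ∨ j ∈ image (J ∘ i''.succAbove) univ then 0
              else g (Fin.cons (J i'') (J ∘ i''.succAbove)) j
                * g (Fin.cons j (J ∘ i''.succAbove)) (J i'')) else 0 := by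
          refine Finset.sum_congr rfl fun J _ => ?_
          by_cases h : Incr J
          · simp only [h, if_true]
            exact Finset.sum_congr rfl fun j _ => inner J j
          · simp [h]
      _ = ∑ j : Fin N, ∑ J : Fin (p+1) → Fin N, if Incr J then
            ∑ i'' : Fin (p+1), -(if j = J i'' ∨ j ∈ image (J ∘ i''.succAbove) univ then 0
              else g (Fin.cons (J i'') (J ∘ i''.succAbove)) j
                * g (Fin.cons j (J ∘ i''.succAbove)) (J i'')) else 0 := swapIte _
      _ = ∑ j : Fin N, ∑ I : Fin p → Fin N, if Incr I then
            ∑ k, (if k ∈ image I univ then 0 else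
              -(if j = k ∨ j ∈ image I univ then 0
                else g (Fin.cons k I) j * g (Fin.cons j I) k)) else 0 :=
          Finset.sum_congr rfl fun j _ => e3 j
      _ = ∑ I : Fin p → Fin N, if Incr I then
            ∑ j, ∑ k, (if k ∈ image I univ then 0 else
              -(if j = k ∨ j ∈ image I univ then 0
                else g (Fin.cons k I) j * g (Fin.cons j I) k)) else 0 :=
          (swapIte fun I j => ∑ k, (if k ∈ image I univ then 0 else
            -(if j = k ∨ j ∈ image I univ then 0
              else g (Fin.cons k I) j * g (Fin.cons j I) k))).symm
      _ = ∑ I : Fin p → Fin N, -(if Incr I then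
            ∑ j, ∑ k, (if k ∈ image I univ then 0 else
              (if j = k ∨ j ∈ image I univ then 0
                else g (Fin.cons k I) j * g (Fin.cons j I) k)) else 0) :=
          Finset.sum_congr rfl fun I _ => negpull I
      _ = -∑ I : Fin p → Fin N, if Incr I then
            ∑ j, ∑ k, (if k ∈ image I univ then 0 else
              (if j = k ∨ j ∈ image I univ then 0
                else g (Fin.cons k I) j * g (Fin.cons j I) k)) else 0 :=
          Finset.sum_neg_distrib _
  -- split the first sum on the right-hand side
  have splitS1 : (∑ J : Fin (p+1) → Fin N, if Incr J then ∑ j, (g J j)^2 else 0)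
      = (∑ J : Fin (p+1) → Fin N, if Incr J then
          ∑ j, (if j ∈ image J univ then 0 else (g J j)^2) else 0)
        + ∑ J : Fin (p+1) → Fin N, if Incr J then
            ∑ j, (if j ∈ image J univ then (g J j)^2 else 0) else 0 := by
    rw [← Finset.sum_add_distrib]
    refine Finset.sum_congr rfl fun J _ => ?_
    by_cases h : Incr J
    · simp only [h, if_true]
      rw [← Finset.sum_add_distrib]
      refine Finset.sum_congr rfl fun j _ => ?_
      by_cases h2 : j ∈ image J univ <;> simp [h2]
    · simp [h]
  -- variant of cons_sign with composition notation
  have cons_sign' : ∀ (l : Fin (p+1) → Fin N) (i : Fin (p+1)) (z : Fin N),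
      g (Fin.cons (l i) (l ∘ i.succAbove)) z = (-1 : ℝ)^(i : ℕ) * g l z :=
    fun l i z => cons_sign g G1 l i z
  -- the boundary terms match
  have rhsB : (∑ J : Fin (p+1) → Fin N, if Incr J then
        ∑ j, (if j ∈ image J univ then (g J j)^2 else 0) else 0)
      = ∑ I : Fin p → Fin N, if Incr I then
          ∑ k, (if k ∈ image I univ then 0
            else g (Fin.cons k I) k * g (Fin.cons k I) k) else 0 := by
    have base : (∑ J : Fin (p+1) → Fin N, if Incr J then
          ∑ s : Fin (p+1), g (Fin.cons (J s) (J ∘ s.succAbove)) (J s)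
            * g (Fin.cons (J s) (J ∘ s.succAbove)) (J s) else 0)
        = ∑ I : Fin p → Fin N, if Incr I then
            ∑ k, (if k ∈ image I univ then 0
              else g (Fin.cons k I) k * g (Fin.cons k I) k) else 0 :=
      ins_sum (fun I k => g (Fin.cons k I) k * g (Fin.cons k I) k)
    rw [← base]
    refine Finset.sum_congr rfl fun J _ => ?_
    by_cases h : Incr J
    · simp only [h, if_true]
      have hinj : Function.Injective J := (incr_iff.mp h).injective
      have hc : ∀ s : Fin (p+1),
          g (Fin.cons (J s) (J ∘ s.succAbove)) (J s)
            * g (Fin.cons (J s) (J ∘ s.succAbove)) (J s) = (g J (J s))^2 := by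
        intro s
        rw [cons_sign' J s (J s)]
        exact hsq _ _
      calc (∑ j, if j ∈ image J univ then (g J j)^2 else 0)
          = ∑ j ∈ image J univ, (g J j)^2 := by
            rw [Finset.sum_ite_mem, Finset.univ_inter]
        _ = ∑ s, (g J (J s))^2 := Finset.sum_image fun a _ b _ hab => hinj hab
        _ = ∑ s : Fin (p+1), g (Fin.cons (J s) (J ∘ s.succAbove)) (J s)
              * g (Fin.cons (J s) (J ∘ s.succAbove)) (J s) :=
            Finset.sum_congr rfl fun s _ => (hc s).symm
    · simp [h]
  -- decomposition of the second right-hand sum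
  have rhs2 : ∀ I : Fin p → Fin N,
      (∑ j, ∑ k, g (Fin.cons k I) j * g (Fin.cons j I) k)
      = (∑ k, (if k ∈ image I univ then 0 else g (Fin.cons k I) k * g (Fin.cons k I) k))
        + ∑ j, ∑ k, (if k ∈ image I univ then 0 else
            (if j = k ∨ j ∈ image I univ then 0
              else g (Fin.cons k I) j * g (Fin.cons j I) k)) := by
    intro I
    have hpt : ∀ j k : Fin N, g (Fin.cons k I) j * g (Fin.cons j I) k
        = (if j = k then (if k ∈ image I univ then 0
            else g (Fin.cons k I) k * g (Fin.cons k I) k) else 0)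
          + (if k ∈ image I univ then 0 else
              (if j = k ∨ j ∈ image I univ then 0
                else g (Fin.cons k I) j * g (Fin.cons j I) k)) := by
      intro j k
      rcases eq_or_ne j k with rfl | hjk
      · by_cases hj : j ∈ image I univ
        · simp [hj, GZ I j hj]
        · simp [hj]
      · by_cases hk : k ∈ image I univ
        · simp [hjk, hk, GZ I k hk]
        · by_cases hj : j ∈ image I univ
          · simp [hjk, hk, hj, GZ I j hj]
          · simp [hjk, hk, hj]
    calc (∑ j, ∑ k, g (Fin.cons k I) j * g (Fin.cons j I) k)
        = ∑ j, ∑ k, ((if j = k then (if k ∈ image I univ then 0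
              else g (Fin.cons k I) k * g (Fin.cons k I) k) else 0)
            + (if k ∈ image I univ then 0 else
                (if j = k ∨ j ∈ image I univ then 0
                  else g (Fin.cons k I) j * g (Fin.cons j I) k))) :=
          Finset.sum_congr rfl fun j _ => Finset.sum_congr rfl fun k _ => hpt j k
      _ = (∑ j, ∑ k, (if j = k then (if k ∈ image I univ then 0
              else g (Fin.cons k I) k * g (Fin.cons k I) k) else 0))
          + ∑ j, ∑ k, (if k ∈ image I univ then 0 else
              (if j = k ∨ j ∈ image I univ then 0
                else g (Fin.cons k I) j * g (Fin.cons j I) k)) := by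
          rw [← Finset.sum_add_distrib]
          exact Finset.sum_congr rfl fun j _ => Finset.sum_add_distrib
      _ = (∑ k, (if k ∈ image I univ then 0 else g (Fin.cons k I) k * g (Fin.cons k I) k))
          + ∑ j, ∑ k, (if k ∈ image I univ then 0 else
              (if j = k ∨ j ∈ image I univ then 0
                else g (Fin.cons k I) j * g (Fin.cons j I) k)) := by
          congr 1
          refine Finset.sum_congr rfl fun j _ => ?_
          rw [Finset.sum_ite_eq univ j (fun k => if k ∈ image I univ then 0
            else g (Fin.cons k I) k * g (Fin.cons k I) k)]
          simp
  have rhs2' : (∑ I : Fin p → Fin N, if Incr I then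
        ∑ j, ∑ k, g (Fin.cons k I) j * g (Fin.cons j I) k else 0)
      = (∑ I : Fin p → Fin N, if Incr I then
          ∑ k, (if k ∈ image I univ then 0
            else g (Fin.cons k I) k * g (Fin.cons k I) k) else 0)
        + ∑ I : Fin p → Fin N, if Incr I then
            ∑ j, ∑ k, (if k ∈ image I univ then 0 else
              (if j = k ∨ j ∈ image I univ then 0
                else g (Fin.cons k I) j * g (Fin.cons j I) k)) else 0 := by
    rw [← Finset.sum_add_distrib]
    refine Finset.sum_congr rfl fun I _ => ?_
    by_cases h : Incr I
    · simp only [h, if_true]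
      exact rhs2 I
    · simp [h]
  rw [splitL, e1, offfinal, splitS1, rhsB, rhs2']
  ring


end NSED


/-- the pointwise identity
`|dα|² = Σ'_J Σ_j |∂α_J/∂x_j|² − Σ'_I Σ_{j,k} (∂α_{kI}/∂x_j)(∂α_{jI}/∂x_k)`
for a smooth `(p+1)`-form `α` with antisymmetrically extended coefficients. -/
theorem norm_sq_exterior_derivative {N p : ℕ}
    (U : Set (EuclideanSpace ℝ (Fin N))) (hU : IsOpen U)
    (α : (Fin (p + 1) → Fin N) → EuclideanSpace ℝ (Fin N) → ℝ)
    (hsmooth : ∀ l, ContDiffOn ℝ (⊤ : ℕ∞) (α l) U)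
    (halt : ∀ (l : Fin (p + 1) → Fin N) (σ : Equiv.Perm (Fin (p + 1))) (x),
      α (l ∘ σ) x = ((Equiv.Perm.sign σ : ℤ) : ℝ) * α l x)
    (hdeg : ∀ l, ¬Function.Injective l → ∀ x, α l x = 0) :
    ∀ x ∈ U,
      (∑ M : Fin (p + 2) → Fin N, if Incr M then (dcoef α M x) ^ 2 else 0)
        = (∑ J : Fin (p + 1) → Fin N, if Incr J then ∑ j, (pd j (α J) x) ^ 2 else 0)
          - ∑ I : Fin p → Fin N, if Incr I then
              ∑ j, ∑ k, pd j (α (Fin.cons k I)) x * pd k (α (Fin.cons j I)) x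
            else 0 := by
  intro x _
  set g : (Fin (p+1) → Fin N) → Fin N → ℝ := fun l j => pd j (α l) x with hg
  have G1 : ∀ (l : Fin (p+1) → Fin N) (σ : Equiv.Perm (Fin (p+1))) (z : Fin N),
      g (l ∘ σ) z = ((Equiv.Perm.sign σ : ℤ) : ℝ) * g l z := by
    intro l σ z
    have hfun : α (l ∘ σ) = fun y => ((Equiv.Perm.sign σ : ℤ) : ℝ) * α l y :=
      funext fun y => halt l σ y
    rcases Int.units_eq_one_or (Equiv.Perm.sign σ) with h | h
    · simp only [hg, hfun, h]
      norm_num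
    · simp only [hg, hfun, h]
      push_cast
      have hneg : (fun y => (-1 : ℝ) * α l y) = fun y => -(α l y) := by
        funext y; ring
      rw [hneg]
      show pd z (fun y => -(α l y)) x = -1 * pd z (α l) x
      unfold pd
      rw [fderiv_fun_neg]
      simp
  have G2 : ∀ l : Fin (p+1) → Fin N, ¬Function.Injective l → ∀ z, g l z = 0 := by
    intro l hl z
    have : α l = fun _ => 0 := funext fun y => hdeg l hl y
    simp only [hg, this]
    unfold pd
    rw [fderiv_fun_const]
    simp
  exact NSED.core g G1 G2
end
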